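/- Let d ≥ 2 and r ≥ 1 be integers and set n := 2^{d+3} r. Then there exists a nonzero polynomial f of degree at most (2^{d+3} r)^{2d} in ℂ[x_{i_1,…,i_d} : i_1, …, i_d ∈ [n]] that vanishes on all tensors in ℂ^n ⊗ ⋯ ⊗ ℂ^n (d factors) with partition rank at most r. -/

import Mathlib

/-!
A tensor of partition rank at most `r` is a specialization of a generic one, a quadratic
polynomial map in `M` parameters with `4 M ≤ N := n ^ d`. Polynomials in the `N` entries with
every exponent at most `N` form a space of dimension `(N + 1) ^ N`; their pullbacks along the
generic tensor are polynomials in `M` variables with every exponent at most `2 N ^ 2`, a space of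
dimension `(2 N ^ 2 + 1) ^ M < (N + 1) ^ N`. So the pullback has a nonzero kernel element `f`,
of total degree at most `N ^ 2 = n ^ (2 d)`, and `f` vanishes on every tensor of partition rank
at most `r`.
-/

open scoped BigOperators

/-- `T` is a single term `A ⊗ B` of a partition rank decomposition. -/
def IsPartitionTerm {K : Type*} [Field K] {d : ℕ} {n : Fin d → ℕ}
    (T : (∀ i, Fin (n i)) → K) : Prop :=
  ∃ I : Finset (Fin d), I.Nonempty ∧ I ≠ Finset.univ ∧
    ∃ (A : (∀ i : {i : Fin d // i ∈ I}, Fin (n i)) → K)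
      (B : (∀ i : {i : Fin d // i ∉ I}, Fin (n i)) → K),
      ∀ x, T x = A (fun i => x i) * B (fun i => x i)

/-- The partition rank of `T` is at most `r`. -/
def PartRankLE {K : Type*} [Field K] {d : ℕ} {n : Fin d → ℕ}
    (T : (∀ i, Fin (n i)) → K) (r : ℕ) : Prop :=
  ∃ c : Fin r → ((∀ i, Fin (n i)) → K),
    (∀ j, IsPartitionTerm (c j)) ∧ T = ∑ j, c j

namespace MvPolynomial

theorem finrank_restrictDegree (σ R : Type*) [Fintype σ] [CommRing R] [StrongRankCondition R]
    (m : ℕ) : Module.finrank R (restrictDegree σ R m) = (m + 1) ^ Fintype.card σ := by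
  let e : {s : σ →₀ ℕ | ∀ i, s i ≤ m} ≃ (σ → Set.Iic m) :=
    (Finsupp.equivFunOnFinite.subtypeEquiv fun _ => Iff.rfl).trans
      (Equiv.subtypePiEquivPi (p := fun _ b => b ≤ m))
  rw [restrictDegree, Module.finrank_eq_nat_card_basis (basisRestrictSupport R _),
    Nat.card_congr e, Nat.card_fun]
  simp

theorem totalDegree_le_of_mem_restrictDegree {σ R : Type*} [Fintype σ] [CommSemiring R]
    {m : ℕ} {f : MvPolynomial σ R} (hf : f ∈ restrictDegree σ R m) :
    f.totalDegree ≤ Fintype.card σ * m := by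
  refine Finset.sup_le fun s hs => ?_
  calc (s.sum fun _ e => e) ≤ ∑ _i ∈ s.support, m :=
        Finset.sum_le_sum fun i _ => (mem_restrictDegree _ _ _).mp hf s hs i
    _ ≤ Fintype.card σ * m := by
        rw [Finset.sum_const, smul_eq_mul]
        exact Nat.mul_le_mul_right m (Finset.card_le_univ _)

theorem totalDegree_aeval_le {σ τ R : Type*} [CommSemiring R] {g : σ → MvPolynomial τ R} {D : ℕ}
    (hg : ∀ i, (g i).totalDegree ≤ D) (f : MvPolynomial σ R) :
    (aeval g f).totalDegree ≤ D * f.totalDegree := by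
  rw [aeval_def, eval₂_eq]
  refine totalDegree_finsetSum_le fun s hs => ?_
  refine (totalDegree_mul _ _).trans ?_
  rw [algebraMap_eq, totalDegree_C, zero_add]
  refine (totalDegree_finsetProd _ _).trans ?_
  calc ∑ i ∈ s.support, (g i ^ s i).totalDegree
      ≤ ∑ i ∈ s.support, D * s i := Finset.sum_le_sum fun i _ =>
        (totalDegree_pow _ _).trans (by rw [mul_comm]; gcongr; exact hg i)
    _ = D * s.sum fun _ e => e := by rw [← Finset.mul_sum]; rfl
    _ ≤ D * f.totalDegree := Nat.mul_le_mul_left D (le_totalDegree hs)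

theorem exists_ne_zero_mem_restrictDegree_aeval_eq_zero {σ τ K : Type*} [Fintype σ] [Fintype τ]
    [Field K] {g : σ → MvPolynomial τ K} {D m : ℕ} (hg : ∀ i, (g i).totalDegree ≤ D)
    (hcard : (D * (Fintype.card σ * m) + 1) ^ Fintype.card τ < (m + 1) ^ Fintype.card σ) :
    ∃ f ∈ restrictDegree σ K m, f ≠ 0 ∧ aeval g f = 0 := by
  have maps_to (f : restrictDegree σ K m) :
      aeval g f.1 ∈ restrictDegree τ K (D * (Fintype.card σ * m)) :=
    restrictTotalDegree_le_restrictDegree _ _ _ <| (mem_restrictTotalDegree _ _ _).mpr <|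
      (totalDegree_aeval_le hg _).trans <|
        Nat.mul_le_mul_left D (totalDegree_le_of_mem_restrictDegree f.2)
  let L := ((aeval g).toLinearMap.comp (restrictDegree σ K m).subtype).codRestrict _ maps_to
  have hker : LinearMap.ker L ≠ ⊥ :=
    LinearMap.ker_ne_bot_of_finrank_lt (by simpa only [finrank_restrictDegree] using hcard)
  obtain ⟨f, hf, hf0⟩ := (Submodule.ne_bot_iff _).mp hker
  exact ⟨f, f.2, by simpa using hf0, congrArg Subtype.val hf⟩

end MvPolynomial

theorem two_mul_mul_self_add_one_pow_lt {M N : ℕ} (hN : 0 < N) (hMN : 4 * M ≤ N) :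
    (2 * (N * N) + 1) ^ M < (N + 1) ^ N := by
  rcases M.eq_zero_or_pos with rfl | hM
  · simpa using Nat.one_lt_pow hN.ne' (by omega)
  calc (2 * (N * N) + 1) ^ M < ((N + 1) ^ 4) ^ M :=
        Nat.pow_lt_pow_left (by nlinarith) hM.ne'
    _ = (N + 1) ^ (4 * M) := by rw [← pow_mul]
    _ ≤ (N + 1) ^ N := Nat.pow_le_pow_right (by omega) hMN

open MvPolynomial Finset

abbrev PartitionIndex (d : ℕ) := {I : Finset (Fin d) // I.Nonempty ∧ I ≠ univ}

abbrev PartitionParam (d n r : ℕ) :=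
  Σ I : PartitionIndex d, Fin r × (({i // i ∈ I.1} → Fin n) ⊕ ({i // i ∉ I.1} → Fin n))

/-- The tensor `∑_I ∑_{j < r} A_{I,j} ⊗ B_{I,j}` whose factors have independent indeterminate
entries `X ⟨I, j, .inl a⟩` and `X ⟨I, j, .inr b⟩`. -/
noncomputable def genericTensor (K : Type*) [CommSemiring K] (d n r : ℕ) (x : Fin d → Fin n) :
    MvPolynomial (PartitionParam d n r) K :=
  ∑ I, ∑ j, X ⟨I, j, .inl fun i => x i⟩ * X ⟨I, j, .inr fun i => x i⟩

theorem totalDegree_genericTensor_le (K : Type*) [CommSemiring K] [Nontrivial K] (d n r : ℕ)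
    (x : Fin d → Fin n) :
    (genericTensor K d n r x).totalDegree ≤ 2 :=
  totalDegree_finsetSum_le fun _ _ => totalDegree_finsetSum_le fun _ _ =>
    (totalDegree_mul _ _).trans <| by simp only [totalDegree_X, le_refl]

theorem card_partitionParam_mul_le (d n r : ℕ) :
    n * Fintype.card (PartitionParam d n r) ≤ 2 ^ (d + 1) * r * n ^ d := by
  have term (I : PartitionIndex d) :
      n * Fintype.card (Fin r × (({i // i ∈ I.1} → Fin n) ⊕ ({i // i ∉ I.1} → Fin n)))
        ≤ 2 * r * n ^ d := by
    have h1 : 0 < #I.1 := card_pos.2 I.2.1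
    have h2 : #I.1 < d := by simpa using card_lt_card (ssubset_univ_iff.2 I.2.2)
    simp only [Fintype.card_prod, Fintype.card_sum, Fintype.card_fun, Fintype.card_fin,
      Fintype.card_coe, Fintype.card_subtype_compl]
    rcases n.eq_zero_or_pos with rfl | hn
    · simp
    have b1 : n * n ^ #I.1 ≤ n ^ d := by
      rw [← pow_succ']; exact Nat.pow_le_pow_right hn (by omega)
    have b2 : n * n ^ (d - #I.1) ≤ n ^ d := by
      rw [← pow_succ']; exact Nat.pow_le_pow_right hn (by omega)
    nlinarith
  calc n * Fintype.card (PartitionParam d n r)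
      ≤ ∑ _I : PartitionIndex d, 2 * r * n ^ d := by
        rw [Fintype.card_sigma, mul_sum]; exact sum_le_sum fun I _ => term I
    _ ≤ 2 ^ d * (2 * r * n ^ d) := by
        rw [sum_const, smul_eq_mul, card_univ]
        gcongr
        exact (Fintype.card_subtype_le _).trans_eq (by simp)
    _ = 2 ^ (d + 1) * r * n ^ d := by ring

/-- Term `j` of a decomposition, with its set `I_j`, becomes the `(I_j, j)` term of the generic
tensor; the factors of every other `(I, j)` are specialized to zero. -/
theorem PartRankLE.exists_eq_eval_genericTensor {K : Type*} [Field K] {d n r : ℕ}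
    {T : (Fin d → Fin n) → K} (hT : PartRankLE (n := fun _ => n) T r) :
    ∃ p : PartitionParam d n r → K, T = fun x => eval p (genericTensor K d n r x) := by
  classical
  obtain ⟨c, hc, rfl⟩ := hT
  choose S hS_ne hS_univ A B hAB using hc
  let p : PartitionParam d n r → K
    | ⟨I, j, .inl a⟩ =>
      if h : I.1 = S j then A j fun i => a ⟨i.1, by rw [h]; exact i.2⟩ else 0
    | ⟨I, j, .inr b⟩ =>
      if h : I.1 = S j then B j fun i => b ⟨i.1, by rw [h]; exact i.2⟩ else 0
  refine ⟨p, funext fun x => ?_⟩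
  simp only [genericTensor, map_sum, eval_mul, eval_X, Finset.sum_apply]
  rw [sum_comm]
  refine sum_congr rfl fun j _ => ?_
  rw [sum_eq_single ⟨S j, hS_ne j, hS_univ j⟩, hAB j x]
  · simp [p]
  · intro I _ hI
    have : I.1 ≠ S j := fun h => hI (Subtype.ext h)
    simp [p, this]
  · simp

theorem exists_vanishing_polynomial_general
    (d r : ℕ) (hr : 1 ≤ r) (n : ℕ) (hn : n = 2 ^ (d + 3) * r) :
    ∃ f : MvPolynomial (Fin d → Fin n) ℂ, f ≠ 0 ∧
      f.totalDegree ≤ (2 ^ (d + 3) * r) ^ (2 * d) ∧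
      ∀ T : (Fin d → Fin n) → ℂ, PartRankLE (n := fun _ => n) T r →
        MvPolynomial.eval T f = 0 := by
  have hn_pos : 0 < n := by rw [hn]; positivity
  set N := n ^ d with hN
  have hcard : Fintype.card (Fin d → Fin n) = N := by simp [hN]
  have hparam : 4 * Fintype.card (PartitionParam d n r) ≤ N := by
    refine Nat.le_of_mul_le_mul_left ?_ hn_pos
    calc n * (4 * Fintype.card (PartitionParam d n r))
        ≤ 4 * (2 ^ (d + 1) * r * n ^ d) := by linarith [card_partitionParam_mul_le d n r]
      _ = n * N := by rw [hN, hn]; ring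
  obtain ⟨f, hf_mem, hf0, hf⟩ := exists_ne_zero_mem_restrictDegree_aeval_eq_zero (m := N)
    (totalDegree_genericTensor_le ℂ d n r)
    (by rw [hcard]; exact two_mul_mul_self_add_one_pow_lt (by positivity) hparam)
  refine ⟨f, hf0, ?_, fun T hT => ?_⟩
  · calc f.totalDegree ≤ N * N := by
          simpa only [hcard] using totalDegree_le_of_mem_restrictDegree hf_mem
      _ = (2 ^ (d + 3) * r) ^ (2 * d) := by rw [← hn, hN, ← pow_add, two_mul]
  · obtain ⟨p, rfl⟩ := hT.exists_eq_eval_genericTensor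
    have h := comp_aeval_apply (f := genericTensor ℂ d n r) (aeval p) f
    rw [hf, map_zero] at h
    simpa using h.symm

/-- Theorem 3.1: for `n = 2^(d+3) r` there is a nonzero polynomial of degree at most
`(2^(d+3) r)^(2d)` in the entries of an `n × ⋯ × n` tensor which vanishes on all
complex tensors of partition rank at most `r`. -/
theorem exists_vanishing_polynomial
    (d r : ℕ) (hd : 2 ≤ d) (hr : 1 ≤ r) (n : ℕ) (hn : n = 2 ^ (d + 3) * r) :
    ∃ f : MvPolynomial (Fin d → Fin n) ℂ, f ≠ 0 ∧
      f.totalDegree ≤ (2 ^ (d + 3) * r) ^ (2 * d) ∧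
      ∀ T : (Fin d → Fin n) → ℂ, PartRankLE (n := fun _ => n) T r →
        MvPolynomial.eval T f = 0 :=
  exists_vanishing_polynomial_general d r hr n hn
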